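/- arXiv:hep-th/0403287 — 2 statements merged into one kernel-verified Lean document; each statement's English description precedes it below -/
import Mathlib

section
/- The quotient ring ℤ[σ]/⟨2(σ-1), σ²-1, 2⟩ is isomorphic to (ℤ/2)[σ]/⟨σ²-1⟩, which as an abelian group is ℤ/2 ⊕ ℤ/2. -/
open Polynomial

lemma span_eq_I :
    Ideal.span ({2 * (X - 1), X ^ 2 - 1, 2} : Set (Polynomial ℤ)) =
      Ideal.span ({X ^ 2 - 1, 2} : Set (Polynomial ℤ)) := by
  apply le_antisymm <;> rw [Ideal.span_le] <;> intro p hp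
  · rcases hp with h | h | h
    · subst h
      rw [mul_comm]
      exact Ideal.mul_mem_left _ _ (Ideal.subset_span (by simp))
    · exact Ideal.subset_span (by simp [h])
    · exact Ideal.subset_span (by simp [h])
  · rcases hp with h | h
    · exact Ideal.subset_span (by simp [h])
    · exact Ideal.subset_span (by simp [h])

noncomputable def ringEquiv8 :
    (Polynomial ℤ ⧸ Ideal.span
        ({2 * (X - 1), X ^ 2 - 1, 2} : Set (Polynomial ℤ))) ≃+*
      (Polynomial (ZMod 2) ⧸ Ideal.span ({X ^ 2 - 1} : Set (Polynomial (ZMod 2)))) := by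
  rw [span_eq_I]
  set g : Polynomial ℤ →+* Polynomial (ZMod 2) := mapRingHom (Int.castRingHom (ZMod 2))
  set J : Ideal (Polynomial (ZMod 2)) := Ideal.span ({X ^ 2 - 1} : Set (Polynomial (ZMod 2)))
  have hgsurj : Function.Surjective g :=
    Polynomial.map_surjective _ (ZMod.intCast_surjective)
  have hfsurj : Function.Surjective ((Ideal.Quotient.mk J).comp g) :=
    (Ideal.Quotient.mk_surjective).comp hgsurj
  have hkerg : RingHom.ker g = Ideal.span ({2} : Set (Polynomial ℤ)) := by
    rw [Polynomial.ker_mapRingHom, ZMod.ker_intCastRingHom, Ideal.map_span]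
    simp
  have hJ : J = Ideal.map g (Ideal.span ({X ^ 2 - 1} : Set (Polynomial ℤ))) := by
    rw [Ideal.map_span]
    simp [g]
    rfl
  have hker : RingHom.ker ((Ideal.Quotient.mk J).comp g) =
      Ideal.span ({X ^ 2 - 1, 2} : Set (Polynomial ℤ)) := by
    have : RingHom.ker ((Ideal.Quotient.mk J).comp g) = Ideal.comap g J := by
      ext x
      simp [RingHom.mem_ker, Ideal.Quotient.eq_zero_iff_mem]
    rw [this, hJ, Ideal.comap_map_of_surjective g hgsurj,
      ← RingHom.ker_eq_comap_bot, hkerg, ← Ideal.span_union]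
    rw [Set.singleton_union, Set.pair_comm]
  rw [← hker]
  exact RingHom.quotientKerEquivOfSurjective hfsurj

noncomputable def addEquiv8' :
    (Polynomial (ZMod 2) ⧸ Ideal.span ({X ^ 2 - 1} : Set (Polynomial (ZMod 2)))) ≃+
      (ZMod 2 × ZMod 2) := by
  have hmonic : (X ^ 2 - 1 : Polynomial (ZMod 2)).Monic := by
    have : (X ^ 2 - 1 : Polynomial (ZMod 2)) = X ^ 2 + (-1) := by ring
    rw [this]
    apply Polynomial.monic_X_pow_add
    simp
  have hdeg : (X ^ 2 - 1 : Polynomial (ZMod 2)).natDegree = 2 := by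
    compute_degree!
  let b : Module.Basis (Fin (X ^ 2 - 1 : Polynomial (ZMod 2)).natDegree) (ZMod 2)
      (AdjoinRoot (X ^ 2 - 1 : Polynomial (ZMod 2))) :=
    AdjoinRoot.powerBasisAux' hmonic
  let b2 : Module.Basis (Fin 2) (ZMod 2) (AdjoinRoot (X ^ 2 - 1 : Polynomial (ZMod 2))) :=
    b.reindex (finCongr hdeg)
  exact (b2.equivFun.trans (LinearEquiv.finTwoArrow (ZMod 2) (ZMod 2))).toAddEquiv

/-- The quotient ring ℤ[σ]/⟨2(σ-1), σ²-1, 2⟩ is isomorphic to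
(ℤ/2)[σ]/⟨σ²-1⟩, which as an abelian group is ℤ/2 ⊕ ℤ/2. -/
theorem stmt_8 :
    Nonempty ((Polynomial ℤ ⧸ Ideal.span
        ({2 * (Polynomial.X - 1), Polynomial.X ^ 2 - 1, 2} : Set (Polynomial ℤ))) ≃+*
      (Polynomial (ZMod 2) ⧸ Ideal.span
        ({Polynomial.X ^ 2 - 1} : Set (Polynomial (ZMod 2))))) ∧
    Nonempty ((Polynomial ℤ ⧸ Ideal.span
        ({2 * (Polynomial.X - 1), Polynomial.X ^ 2 - 1, 2} : Set (Polynomial ℤ))) ≃+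
      (ZMod 2 × ZMod 2)) := by
  exact ⟨⟨ringEquiv8⟩, ⟨(ringEquiv8.toAddEquiv).trans addEquiv8'⟩⟩
end

section
/- For κ ≥ 1 odd, the quotient ring ℤ[Λ,σ]/⟨Λ(σ-1), σ²-1, p_κ(Λ), Λ-2⟩ is isomorphic as an abelian group to ℤ/2 ⊕ ℤ/2, where p_κ ∈ ℤ[Λ] is any polynomial with zero constant term and p_κ(2) = 2. -/
/-- ℤ[Λ,σ], modeled as polynomials in σ over ℤ[Λ]. -/
noncomputable abbrev TwoVarPoly : Type := Polynomial (Polynomial ℤ)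

/-- The variable Λ of ℤ[Λ,σ]. -/
noncomputable def Lam : TwoVarPoly := Polynomial.C Polynomial.X

/-- The variable σ of ℤ[Λ,σ]. -/
noncomputable def Sg : TwoVarPoly := Polynomial.X

open Polynomial

/-- coefficient map ℤ[Λ] → ZMod 2 : evaluate at 0, reduce mod 2 -/
noncomputable def psi : Polynomial ℤ →+* ZMod 2 :=
  (Int.castRingHom (ZMod 2)).comp (Polynomial.evalRingHom 0)

lemma ker_psi_le : (RingHom.ker psi : Ideal (Polynomial ℤ)) ≤
    Ideal.span ({C 2, X} : Set (Polynomial ℤ)) := by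
  intro g hg
  have h : ((g.eval 0 : ℤ) : ZMod 2) = 0 := hg
  rw [ZMod.intCast_zmod_eq_zero_iff_dvd] at h
  obtain ⟨k, hk⟩ := h
  have hx : X ∣ g - C (g.eval 0) := by
    rw [X_dvd_iff]
    simp [coeff_zero_eq_eval_zero]
  obtain ⟨q, hq⟩ := hx
  rw [sub_eq_iff_eq_add] at hq
  have hgk : g = C 2 * C k + X * q := by
    rw [hq, hk, ← C_mul]; push_cast; ring
  rw [hgk]
  exact Ideal.add_mem _
    (Ideal.mul_mem_right _ _ (Ideal.subset_span (by simp)))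
    (Ideal.mul_mem_right _ _ (Ideal.subset_span (by simp)))

/-- For odd κ ≥ 1, the quotient ring ℤ[Λ,σ]/⟨Λ(σ-1), σ²-1, p_κ(Λ), Λ-2⟩ is
isomorphic as an abelian group to ℤ/2 ⊕ ℤ/2, where `p_κ ∈ ℤ[Λ]` is any polynomial
with zero constant term and `p_κ(2) = 2`. -/
theorem stmt_14 (κ : ℕ) (hκ : 1 ≤ κ) (hodd : Odd κ)
    (p : Polynomial ℤ) (h0 : p.coeff 0 = 0) (h2 : p.eval 2 = 2) :
    Nonempty ((TwoVarPoly ⧸ Ideal.span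
      ({Lam * (Sg - 1), Sg ^ 2 - 1, Polynomial.C p, Lam - 2} : Set TwoVarPoly)) ≃+
      (ZMod 2 × ZMod 2)) := by
  set I : Ideal TwoVarPoly :=
    Ideal.span ({Lam * (Sg - 1), Sg ^ 2 - 1, Polynomial.C p, Lam - 2} : Set TwoVarPoly)
  -- Step 1: 2 ∈ I, Λ ∈ I
  have h2I : (2 : TwoVarPoly) ∈ I := by
    have hdvd : (X - C 2 : Polynomial ℤ) ∣ p - C 2 := by
      rw [dvd_iff_isRoot]; simp [IsRoot, h2]
    obtain ⟨q, hq⟩ := hdvd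
    have : (2 : TwoVarPoly) = C p - (Lam - 2) * C q := by
      have : (p : Polynomial ℤ) = (X - C 2) * q + C 2 := by rw [← hq]; ring
      rw [this]
      simp only [Lam, map_add, map_mul, map_sub, map_ofNat]
      push_cast
      ring_nf
    rw [this]
    exact Ideal.sub_mem _ (Ideal.subset_span (by simp))
      (Ideal.mul_mem_right _ _ (Ideal.subset_span (by simp)))
  have hLamI : Lam ∈ I := by
    have : Lam = (Lam - 2) + 2 := by ring
    rw [this]
    exact Ideal.add_mem _ (Ideal.subset_span (by simp)) h2I
  -- Step 2: the homomorphism to AdjoinRoot (X^2 - 1) over ZMod 2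
  set g : Polynomial (ZMod 2) := X ^ 2 - 1
  have hg : g.Monic := by
    have := Polynomial.monic_X_pow_sub_C (1 : ZMod 2) (two_ne_zero)
    simpa [g] using this
  set Φ : TwoVarPoly →+* AdjoinRoot g :=
    (AdjoinRoot.mk g).comp (Polynomial.mapRingHom psi)
  have hψX : psi X = 0 := by simp [psi]
  have hψ2 : psi 2 = 0 := by
    simp only [map_ofNat]
    decide
  have hψsurj : Function.Surjective psi := by
    intro z
    obtain ⟨n, rfl⟩ := ZMod.intCast_surjective z
    exact ⟨C n, by simp [psi]⟩
  have hΦsurj : Function.Surjective Φ := by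
    exact (AdjoinRoot.mk_surjective).comp (Polynomial.map_surjective _ hψsurj)
  -- Step 3: kernel of Φ is I
  have hker : RingHom.ker Φ = I := by
    apply le_antisymm
    · -- ker Φ ≤ I
      intro f hf
      have hmk : AdjoinRoot.mk g (f.map psi) = 0 := hf
      rw [AdjoinRoot.mk_eq_zero] at hmk
      obtain ⟨h, hh⟩ := hmk
      obtain ⟨H, hH⟩ := Polynomial.map_surjective psi hψsurj h
      have hgmap : (X ^ 2 - 1 : TwoVarPoly).map psi = g := by
        rw [Polynomial.map_sub, Polynomial.map_pow, Polynomial.map_X,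
          Polynomial.map_one]
      have hmap0 : (f - (X ^ 2 - 1) * H).map psi = 0 := by
        rw [Polynomial.map_sub, Polynomial.map_mul, hgmap, hH, hh, sub_self]
      have hcoeff : ∀ n, (f - (X ^ 2 - 1) * H).coeff n ∈
          Ideal.span ({C 2, X} : Set (Polynomial ℤ)) := by
        intro n
        apply ker_psi_le
        rw [RingHom.mem_ker, ← Polynomial.coeff_map, hmap0, Polynomial.coeff_zero]
      have hmem : f - (X ^ 2 - 1) * H ∈
          (Ideal.span ({C 2, X} : Set (Polynomial ℤ))).map
            (C : Polynomial ℤ →+* TwoVarPoly) := by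
        rw [Ideal.mem_map_C_iff]
        exact hcoeff
      have hmaple : (Ideal.span ({C 2, X} : Set (Polynomial ℤ))).map
          (C : Polynomial ℤ →+* TwoVarPoly) ≤ I := by
        rw [Ideal.map_span]
        apply Ideal.span_le.2
        rintro x ⟨y, hy, rfl⟩
        rcases hy with rfl | rfl
        · simpa [map_ofNat] using h2I
        · exact hLamI
      have hf2 : f = (f - (X ^ 2 - 1) * H) + (X ^ 2 - 1) * H := by ring
      rw [hf2]
      refine Ideal.add_mem _ (hmaple hmem) (Ideal.mul_mem_right _ _ ?_)
      exact Ideal.subset_span (by simp [Sg])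
    · -- I ≤ ker Φ
      rw [Ideal.span_le]
      rintro x (rfl | rfl | rfl | rfl)
      · show Φ _ = 0
        simp only [Φ, RingHom.comp_apply, Lam, Sg, Polynomial.coe_mapRingHom]
        rw [Polynomial.map_mul, Polynomial.map_sub, Polynomial.map_C,
          Polynomial.map_X, Polynomial.map_one, hψX]
        simp
      · show Φ _ = 0
        simp only [Φ, RingHom.comp_apply, Sg, Polynomial.coe_mapRingHom]
        rw [Polynomial.map_sub, Polynomial.map_pow, Polynomial.map_X,
          Polynomial.map_one]
        exact AdjoinRoot.mk_self
      · show Φ _ = 0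
        simp only [Φ, RingHom.comp_apply, Polynomial.coe_mapRingHom]
        rw [Polynomial.map_C]
        have : psi p = 0 := by
          have : (X : Polynomial ℤ) ∣ p := X_dvd_iff.2 h0
          obtain ⟨q, rfl⟩ := this
          rw [map_mul, hψX, zero_mul]
        rw [this]
        simp
      · show Φ _ = 0
        simp only [Φ, RingHom.comp_apply, Lam, Polynomial.coe_mapRingHom]
        have h20 : (2 : Polynomial (ZMod 2)) = 0 := by
          have h : (2 : ZMod 2) = 0 := rfl
          rw [← map_ofNat (Polynomial.C : ZMod 2 →+* Polynomial (ZMod 2)) 2, h,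
            map_zero]
        rw [Polynomial.map_sub, Polynomial.map_C, hψX, Polynomial.map_ofNat, h20]
        simp
  -- Step 4: assemble
  have e1 : (TwoVarPoly ⧸ I) ≃+* AdjoinRoot g :=
    (Ideal.quotEquivOfEq hker.symm).trans
      (RingHom.quotientKerEquivOfSurjective hΦsurj)
  have hdeg : g.natDegree = 2 := by
    simp only [g]
    compute_degree!
  have b : Module.Basis (Fin 2) (ZMod 2) (AdjoinRoot g) :=
    (AdjoinRoot.powerBasisAux' hg).reindex (finCongr hdeg)
  have e2 : AdjoinRoot g ≃+ (Fin 2 → ZMod 2) := b.equivFun.toAddEquiv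
  have e3 : (Fin 2 → ZMod 2) ≃+ ZMod 2 × ZMod 2 :=
    { piFinTwoEquiv (fun _ => ZMod 2) with map_add' := fun _ _ => rfl }
  exact ⟨(e1.toAddEquiv.trans e2).trans e3⟩
end
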